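/- Let m ∈ ℝ, let (δ_j)_{j≥1} be a strictly increasing sequence of positive reals with δ_j → ∞, and let (a_j)_{j≥1} be positive reals with Σ_j a_j²/δ_j < ∞. For ν ∈ (0,∞) with ν ∉ {δ_j} define λ(ν) = m − Σ_{j≥1} ν·a_j²/(ν − δ_j) (the series converges absolutely). Then for every j ≥ 1: λ is strictly increasing on the interval (δ_j, δ_{j+1}); λ(ν) → −∞ as ν → δ_j⁺ and λ(ν) → +∞ as ν → δ_{j+1}⁻; consequently λ has exactly one zero ν_j in (δ_j, δ_{j+1}). In particular the zeros and poles interlace: ν_{j−1} < δ_j < ν_j for every j ≥ 2. -/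

import Mathlib

/-!
Each term `ν a_i² / (ν - δ_i) = a_i² + a_i² δ_i / (ν - δ_i)` is strictly decreasing on
every interval free of poles, so on `(δ_j, δ_{j+1})` the series is strictly decreasing and `λ`
strictly increasing. The same monotonicity makes the values at the ends of any compact subinterval a
summable majorant, so the series is continuous there. Near `δ_j` (resp. `δ_{j+1}`) the rest of the
series stays bounded by monotonicity, while the single term with that pole tends to `+∞`
(resp. `-∞`). The intermediate value theorem and injectivity then give exactly one zero.
-/

open Filter Set Topology

section SeriesOfMonotoneFunctions

variable {ι α : Type*} {f : ι → α → ℝ} {s : Set α}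

lemma antitoneOn_tsum [Preorder α] (hf : ∀ i, AntitoneOn (f i) s)
    (hsum : ∀ x ∈ s, Summable fun i => f i x) : AntitoneOn (fun x => ∑' i, f i x) s :=
  fun x hx y hy hxy => (hsum y hy).tsum_le_tsum (fun i => hf i hx hy hxy) (hsum x hx)

lemma strictAntiOn_tsum [Preorder α] [Nonempty ι] (hf : ∀ i, StrictAntiOn (f i) s)
    (hsum : ∀ x ∈ s, Summable fun i => f i x) : StrictAntiOn (fun x => ∑' i, f i x) s :=
  fun x hx y hy hxy => (hsum y hy).tsum_lt_tsum (fun i => (hf i hx hy hxy).le)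
    (hf (Classical.arbitrary ι) hx hy hxy) (hsum x hx)

lemma antitoneOn_tsum_sub [Preorder α] [DecidableEq ι] (hf : ∀ i, AntitoneOn (f i) s)
    (hsum : ∀ x ∈ s, Summable fun i => f i x) (k : ι) :
    AntitoneOn (fun x => ∑' i, f i x - f k x) s := by
  have hrest : AntitoneOn (fun x => ∑' i, if i = k then 0 else f i x) s := by
    refine antitoneOn_tsum (fun i => ?_) fun x hx => (hsum x hx).congr_cofinite ?_
    · split_ifs
      · exact antitoneOn_const
      · exact hf i
    · filter_upwards [eventually_cofinite_ne k] with i hi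
      rw [if_neg hi]
  refine hrest.congr fun x hx => ?_
  dsimp only
  rw [(hsum x hx).tsum_eq_add_tsum_ite k]
  ring

/-- An antitone function on `[a, b]` lies between its values at the endpoints, which gives a
summable majorant. -/
lemma continuousOn_tsum_of_antitoneOn {a b : ℝ} {f : ι → ℝ → ℝ}
    (hcont : ∀ i, ContinuousOn (f i) (Icc a b)) (hanti : ∀ i, AntitoneOn (f i) (Icc a b))
    (ha : Summable fun i => f i a) (hb : Summable fun i => f i b) :
    ContinuousOn (fun x => ∑' i, f i x) (Icc a b) := by
  refine continuousOn_tsum hcont (ha.abs.add hb.abs) fun i x hx => ?_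
  have hab : a ≤ b := hx.1.trans hx.2
  have hxa := hanti i (left_mem_Icc.2 hab) hx hx.1
  have hbx := hanti i hx (right_mem_Icc.2 hab) hx.2
  rw [Real.norm_eq_abs, abs_le]
  constructor <;> linarith [neg_abs_le (f i b), le_abs_self (f i a), abs_nonneg (f i a),
    abs_nonneg (f i b)]

end SeriesOfMonotoneFunctions

section LimitsAtEndpoints

variable {f g : ℝ → ℝ} {a b : ℝ}

lemma tendsto_nhdsGT_atTop_of_antitoneOn_sub (hab : a < b)
    (hanti : AntitoneOn (fun x => f x - g x) (Ioo a b)) (hg : Tendsto g (𝓝[>] a) atTop) :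
    Tendsto f (𝓝[>] a) atTop := by
  obtain ⟨c, hac, hcb⟩ := exists_between hab
  refine tendsto_atTop_mono' _ ?_ (tendsto_atTop_add_const_right _ (f c - g c) hg)
  filter_upwards [Ioo_mem_nhdsGT hac] with x hx
  have := hanti ⟨hx.1, hx.2.trans hcb⟩ ⟨hac, hcb⟩ hx.2.le
  linarith

lemma tendsto_nhdsLT_atBot_of_antitoneOn_sub (hab : a < b)
    (hanti : AntitoneOn (fun x => f x - g x) (Ioo a b)) (hg : Tendsto g (𝓝[<] b) atBot) :
    Tendsto f (𝓝[<] b) atBot := by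
  obtain ⟨c, hac, hcb⟩ := exists_between hab
  refine tendsto_atBot_mono' _ ?_ (tendsto_atBot_add_const_right _ (f c - g c) hg)
  filter_upwards [Ioo_mem_nhdsLT hcb] with x hx
  have := hanti ⟨hac, hcb⟩ ⟨hac.trans hx.1, hx.2⟩ hx.1.le
  linarith

lemma existsUnique_eq_of_strictMonoOn_Ioo (hab : a < b) (hmono : StrictMonoOn f (Ioo a b))
    (hcont : ContinuousOn f (Ioo a b)) (hbot : Tendsto f (𝓝[>] a) atBot)
    (htop : Tendsto f (𝓝[<] b) atTop) (y : ℝ) : ∃! x, x ∈ Ioo a b ∧ f x = y := by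
  obtain ⟨x, hx, hfx⟩ := hcont.surjOn_of_tendsto (nonempty_Ioo.2 hab)
    ((tendsto_comp_coe_Ioo_atBot hab).2 hbot) ((tendsto_comp_coe_Ioo_atTop hab).2 htop)
    (mem_univ y)
  exact ⟨x, ⟨hx, hfx⟩, fun z hz => hmono.injOn hz.1 hx (hz.2.trans hfx.symm)⟩

end LimitsAtEndpoints

section SimplePole

variable {w d : ℝ}

lemma strictAntiOn_mul_div_sub (hw : 0 < w) (hd : 0 < d) {s : Set ℝ}
    (hs : s ⊆ Ioi d ∨ s ⊆ Iio d) : StrictAntiOn (fun ν => ν * w / (ν - d)) s := by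
  intro x hx y hy hxy
  have hprod : 0 < (x - d) * (y - d) := by
    rcases hs with hs | hs
    · exact mul_pos (sub_pos.2 (hs hx)) (sub_pos.2 (hs hy))
    · exact mul_pos_of_neg_of_neg (sub_neg.2 (hs hx)) (sub_neg.2 (hs hy))
  have hx' : x - d ≠ 0 := left_ne_zero_of_mul hprod.ne'
  have hy' : y - d ≠ 0 := right_ne_zero_of_mul hprod.ne'
  have hdiff : x * w / (x - d) - y * w / (y - d) = w * d * (y - x) / ((x - d) * (y - d)) := by
    field_simp
    ring
  have hyx := sub_pos.2 hxy
  have : 0 < w * d * (y - x) / ((x - d) * (y - d)) := by positivity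
  dsimp only
  linarith

lemma tendsto_mul_div_sub_nhdsGT (hw : 0 < w) (hd : 0 < d) :
    Tendsto (fun ν => ν * w / (ν - d)) (𝓝[>] d) atTop := by
  have hnum : Tendsto (fun ν => ν * w) (𝓝[>] d) (𝓝 (d * w)) :=
    ((continuous_mul_const w).tendsto d).mono_left nhdsWithin_le_nhds
  have hden : Tendsto (fun ν => ν - d) (𝓝[>] d) (𝓝[>] 0) := by
    refine tendsto_nhdsWithin_iff.2 ⟨?_, eventually_nhdsWithin_of_forall fun ν hν => ?_⟩
    · simpa using ((continuous_sub_right d).tendsto d).mono_left nhdsWithin_le_nhds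
    · exact mem_Ioi.2 (sub_pos.2 hν)
  simpa only [div_eq_mul_inv, Function.comp_def] using
    hnum.pos_mul_atTop (mul_pos hd hw) (tendsto_inv_nhdsGT_zero.comp hden)

lemma tendsto_mul_div_sub_nhdsLT (hw : 0 < w) (hd : 0 < d) :
    Tendsto (fun ν => ν * w / (ν - d)) (𝓝[<] d) atBot := by
  have hnum : Tendsto (fun ν => ν * w) (𝓝[<] d) (𝓝 (d * w)) :=
    ((continuous_mul_const w).tendsto d).mono_left nhdsWithin_le_nhds
  have hden : Tendsto (fun ν => ν - d) (𝓝[<] d) (𝓝[<] 0) := by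
    refine tendsto_nhdsWithin_iff.2 ⟨?_, eventually_nhdsWithin_of_forall fun ν hν => ?_⟩
    · simpa using ((continuous_sub_right d).tendsto d).mono_left nhdsWithin_le_nhds
    · exact mem_Iio.2 (sub_neg.2 hν)
  simpa only [div_eq_mul_inv, Function.comp_def] using
    hnum.pos_mul_atBot (mul_pos hd hw) (tendsto_inv_nhdsLT_zero.comp hden)

end SimplePole

/-- With `wᵢ = aᵢ²`, the paper's `λ` is `m - poleSeries δ w`. -/
noncomputable def poleSeries (δ w : ℕ → ℝ) (ν : ℝ) : ℝ := ∑' i, ν * w i / (ν - δ i)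

section PoleSeries

variable {δ w : ℕ → ℝ}

lemma summable_mul_div_sub (hδ : Tendsto δ atTop atTop) (hsum : Summable fun i => w i / δ i)
    (ν : ℝ) : Summable fun i => ν * w i / (ν - δ i) := by
  refine (hsum.abs.mul_left (2 * |ν|)).of_norm_bounded_eventually ?_
  rw [Nat.cofinite_eq_atTop]
  filter_upwards [hδ.eventually_gt_atTop (2 * |ν|)] with i hi
  have hδi : 0 < δ i := lt_of_le_of_lt (by positivity) hi
  have hgap : δ i / 2 ≤ |ν - δ i| := by
    rw [abs_sub_comm]
    linarith [le_abs_self (δ i - ν), le_abs_self ν]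
  rw [Real.norm_eq_abs, abs_div, abs_mul, abs_div, abs_of_pos hδi]
  calc |ν| * |w i| / |ν - δ i| ≤ |ν| * |w i| / (δ i / 2) :=
        div_le_div_of_nonneg_left (by positivity) (by positivity) hgap
    _ = 2 * |ν| * (|w i| / δ i) := by ring

lemma Ioo_subset_Ioi_or_Iio (hδ : Monotone δ) (i j : ℕ) :
    Ioo (δ j) (δ (j + 1)) ⊆ Ioi (δ i) ∨ Ioo (δ j) (δ (j + 1)) ⊆ Iio (δ i) := by
  rcases le_or_gt i j with h | h
  · exact Or.inl fun x hx => (hδ h).trans_lt hx.1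
  · exact Or.inr fun x hx => hx.2.trans_le (hδ h)

lemma strictAntiOn_pole_term (hδ : StrictMono δ) (hδpos : ∀ i, 0 < δ i) (hw : ∀ i, 0 < w i)
    (i j : ℕ) : StrictAntiOn (fun ν => ν * w i / (ν - δ i)) (Ioo (δ j) (δ (j + 1))) :=
  strictAntiOn_mul_div_sub (hw i) (hδpos i) (Ioo_subset_Ioi_or_Iio hδ.monotone i j)

lemma strictAntiOn_poleSeries (hδ : StrictMono δ) (hδpos : ∀ i, 0 < δ i)
    (hw : ∀ i, 0 < w i) (hδtop : Tendsto δ atTop atTop)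
    (hsum : Summable fun i => w i / δ i) (j : ℕ) :
    StrictAntiOn (poleSeries δ w) (Ioo (δ j) (δ (j + 1))) :=
  strictAntiOn_tsum (strictAntiOn_pole_term hδ hδpos hw · j)
    fun ν _ => summable_mul_div_sub hδtop hsum ν

lemma continuousOn_poleSeries (hδ : StrictMono δ) (hδpos : ∀ i, 0 < δ i)
    (hw : ∀ i, 0 < w i) (hδtop : Tendsto δ atTop atTop)
    (hsum : Summable fun i => w i / δ i) (j : ℕ) :
    ContinuousOn (poleSeries δ w) (Ioo (δ j) (δ (j + 1))) := by
  intro x hx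
  obtain ⟨α, hα, hαx⟩ := exists_between hx.1
  obtain ⟨β, hxβ, hβ⟩ := exists_between hx.2
  have hsub : Icc α β ⊆ Ioo (δ j) (δ (j + 1)) := Icc_subset_Ioo hα hβ
  have hterm (i : ℕ) : ContinuousOn (fun ν => ν * w i / (ν - δ i)) (Icc α β) := by
    refine (continuousOn_id.mul continuousOn_const).div (continuousOn_id.sub continuousOn_const)
      fun ν hν => sub_ne_zero.2 ?_
    rcases Ioo_subset_Ioi_or_Iio hδ.monotone i j with h | h
    exacts [(h (hsub hν)).ne', (h (hsub hν)).ne]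
  have hIcc : ContinuousOn (poleSeries δ w) (Icc α β) :=
    continuousOn_tsum_of_antitoneOn hterm
      (fun i => (strictAntiOn_pole_term hδ hδpos hw i j).antitoneOn.mono hsub)
      (summable_mul_div_sub hδtop hsum α) (summable_mul_div_sub hδtop hsum β)
  exact (hIcc.continuousAt (Icc_mem_nhds hαx hxβ)).continuousWithinAt

lemma antitoneOn_poleSeries_sub_term (hδ : StrictMono δ) (hδpos : ∀ i, 0 < δ i)
    (hw : ∀ i, 0 < w i) (hδtop : Tendsto δ atTop atTop)
    (hsum : Summable fun i => w i / δ i) (j k : ℕ) :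
    AntitoneOn (fun ν => poleSeries δ w ν - ν * w k / (ν - δ k)) (Ioo (δ j) (δ (j + 1))) :=
  antitoneOn_tsum_sub (fun i => (strictAntiOn_pole_term hδ hδpos hw i j).antitoneOn)
    (fun ν _ => summable_mul_div_sub hδtop hsum ν) k

lemma tendsto_poleSeries_nhdsGT (hδ : StrictMono δ) (hδpos : ∀ i, 0 < δ i)
    (hw : ∀ i, 0 < w i) (hδtop : Tendsto δ atTop atTop)
    (hsum : Summable fun i => w i / δ i) (j : ℕ) :
    Tendsto (poleSeries δ w) (𝓝[>] δ j) atTop :=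
  tendsto_nhdsGT_atTop_of_antitoneOn_sub (hδ j.lt_succ_self)
    (antitoneOn_poleSeries_sub_term hδ hδpos hw hδtop hsum j j)
    (tendsto_mul_div_sub_nhdsGT (hw j) (hδpos j))

lemma tendsto_poleSeries_nhdsLT (hδ : StrictMono δ) (hδpos : ∀ i, 0 < δ i)
    (hw : ∀ i, 0 < w i) (hδtop : Tendsto δ atTop atTop)
    (hsum : Summable fun i => w i / δ i) (j : ℕ) :
    Tendsto (poleSeries δ w) (𝓝[<] δ (j + 1)) atBot :=
  tendsto_nhdsLT_atBot_of_antitoneOn_sub (hδ j.lt_succ_self)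
    (antitoneOn_poleSeries_sub_term hδ hδpos hw hδtop hsum j (j + 1))
    (tendsto_mul_div_sub_nhdsLT (hw (j + 1)) (hδpos (j + 1)))

end PoleSeries

/-- Theorem 10.5, analytic core: for
`λ(ν) = m − Σ_j ν·a_j²/(ν − δ_j)` with `δ_j` strictly increasing positive tending
to `∞` and `Σ a_j²/δ_j < ∞`: the series converges absolutely off the poles, `λ` is
strictly increasing on each `(δ_j, δ_{j+1})` with limits `−∞` and `+∞` at the
endpoints, has exactly one zero `ν_j` there, and the zeros interlace the poles. -/
theorem effective_mass_root_interlacing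
    (m : ℝ) (δ a : ℕ → ℝ)
    (hδmono : StrictMono δ) (hδpos : ∀ j, 0 < δ j)
    (hδtop : Filter.Tendsto δ Filter.atTop Filter.atTop)
    (hapos : ∀ j, 0 < a j)
    (hsum : Summable (fun j => a j ^ 2 / δ j)) :
    (∀ ν : ℝ, 0 < ν → ν ∉ Set.range δ →
        Summable (fun j => |ν * a j ^ 2 / (ν - δ j)|)) ∧
    (∀ j : ℕ,
      StrictMonoOn (fun ν : ℝ => m - ∑' i : ℕ, ν * a i ^ 2 / (ν - δ i))
        (Set.Ioo (δ j) (δ (j + 1))) ∧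
      Filter.Tendsto (fun ν : ℝ => m - ∑' i : ℕ, ν * a i ^ 2 / (ν - δ i))
        (nhdsWithin (δ j) (Set.Ioo (δ j) (δ (j + 1)))) Filter.atBot ∧
      Filter.Tendsto (fun ν : ℝ => m - ∑' i : ℕ, ν * a i ^ 2 / (ν - δ i))
        (nhdsWithin (δ (j + 1)) (Set.Ioo (δ j) (δ (j + 1)))) Filter.atTop ∧
      (∃! ν : ℝ, ν ∈ Set.Ioo (δ j) (δ (j + 1)) ∧
        m - ∑' i : ℕ, ν * a i ^ 2 / (ν - δ i) = 0)) ∧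
    (∀ ν : ℕ → ℝ,
      (∀ j, ν j ∈ Set.Ioo (δ j) (δ (j + 1)) ∧
        m - ∑' i : ℕ, ν j * a i ^ 2 / (ν j - δ i) = 0) →
      ∀ j : ℕ, 1 ≤ j → ν (j - 1) < δ j ∧ δ j < ν j) := by
  have hw : ∀ i, 0 < a i ^ 2 := fun i => pow_pos (hapos i) 2
  refine ⟨fun ν _ _ => (summable_mul_div_sub hδtop hsum ν).abs, fun j => ?_, fun ν hν j hj =>
    ⟨by simpa only [Nat.sub_add_cancel hj] using (hν (j - 1)).1.2, (hν j).1.1⟩⟩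
  set g := poleSeries δ (a · ^ 2)
  have hmono : StrictMonoOn (fun ν => m - g ν) (Ioo (δ j) (δ (j + 1))) :=
    fun x hx y hy hxy =>
      sub_lt_sub_left (strictAntiOn_poleSeries hδmono hδpos hw hδtop hsum j hx hy hxy) m
  have hbot : Tendsto (fun ν => m - g ν) (𝓝[>] δ j) atBot :=
    tendsto_atBot_add_const_left _ m
      (tendsto_neg_atTop_atBot.comp (tendsto_poleSeries_nhdsGT hδmono hδpos hw hδtop hsum j))
  have htop : Tendsto (fun ν => m - g ν) (𝓝[<] δ (j + 1)) atTop :=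
    tendsto_atTop_add_const_left _ m
      (tendsto_neg_atBot_atTop.comp (tendsto_poleSeries_nhdsLT hδmono hδpos hw hδtop hsum j))
  have hcont : ContinuousOn (fun ν => m - g ν) (Ioo (δ j) (δ (j + 1))) :=
    continuousOn_const.sub (continuousOn_poleSeries hδmono hδpos hw hδtop hsum j)
  have hj := hδmono j.lt_succ_self
  rw [nhdsWithin_Ioo_eq_nhdsGT hj, nhdsWithin_Ioo_eq_nhdsLT hj]
  exact ⟨hmono, hbot, htop, existsUnique_eq_of_strictMonoOn_Ioo hj hmono hcont hbot htop 0⟩
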